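/- For w ∈ [1/3, 1], |ψ(w)| ≤ 2 − π²/9, where ψ(w) = (1−w)(e^{−2πiw} + e^{−4πiw}) + (1/(3πi))(1 − e^{−6πiw}). -/

import Mathlib

/-!
The first term of `ψ` is `(1 - w) e^{-3πiw} · 2 cos(πw)`, so
`|ψ(w)| ≤ 2 (1 - w) |cos(πw)| + 2/(3π)`. On `[1/3, 2/3]` we have `|cos(πw)| ≤ 1/2` and
`1 - w ≤ 2/3`, while beyond `2/3` already `1 - w ≤ 1/3`; hence `(1 - w) |cos(πw)| ≤ 1/3`, and
`2/3 + 2/(3π) ≤ 2 - π²/9` follows from `3.14 < π < 3.15`.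
-/

open Real

/-- The Fourier transform of the localizing function `φ` on `[0,1]`. -/
noncomputable def psi (w : ℝ) : ℂ :=
  (1 - (w : ℂ)) * (Complex.exp (-2 * (π : ℂ) * Complex.I * (w : ℂ)) +
      Complex.exp (-4 * (π : ℂ) * Complex.I * (w : ℂ))) +
    (1 / (3 * (π : ℂ) * Complex.I)) * (1 - Complex.exp (-6 * (π : ℂ) * Complex.I * (w : ℂ)))

namespace Complex

theorem norm_exp_mul_I_add_exp_mul_I (x y : ℝ) :
    ‖exp (x * I) + exp (y * I)‖ = 2 * |Real.cos ((x - y) / 2)| := by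
  have hsum : exp (x * I) + exp (y * I) =
      exp (((x + y) / 2 : ℝ) * I) * (2 * ((Real.cos ((x - y) / 2) : ℝ) : ℂ)) := by
    rw [ofReal_cos, cos, mul_div_cancel₀ _ two_ne_zero, mul_add, ← exp_add, ← exp_add]
    push_cast
    ring_nf
  rw [hsum, norm_mul, norm_exp_ofReal_mul_I, one_mul, norm_mul, norm_real, Real.norm_eq_abs]
  norm_num

theorem norm_one_sub_exp_mul_I_le_two (x : ℝ) : ‖1 - exp (x * I)‖ ≤ 2 :=
  (norm_sub_le _ _).trans_eq (by rw [norm_one, norm_exp_ofReal_mul_I]; norm_num)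

end Complex

open Complex in
theorem norm_psi_le (w : ℝ) :
    ‖psi w‖ ≤ 2 * |1 - w| * |Real.cos (π * w)| + 2 / (3 * π) := by
  have hexp2 : -2 * π * I * w = ((-2 * π * w : ℝ) : ℂ) * I := by push_cast; ring
  have hexp4 : -4 * π * I * w = ((-4 * π * w : ℝ) : ℂ) * I := by push_cast; ring
  have hexp6 : -6 * π * I * w = ((-6 * π * w : ℝ) : ℂ) * I := by push_cast; ring
  have hosc : ‖(1 - (w : ℂ)) * (exp (-2 * π * I * w) + exp (-4 * π * I * w))‖ =
      2 * |1 - w| * |Real.cos (π * w)| := by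
    rw [hexp2, hexp4, norm_mul, norm_exp_mul_I_add_exp_mul_I, ← ofReal_one, ← ofReal_sub,
      norm_real, Real.norm_eq_abs]
    ring_nf
  have htail : ‖1 / (3 * (π : ℂ) * I) * (1 - exp (-6 * π * I * w))‖ ≤ 2 / (3 * π) := by
    have hconst : ‖1 / (3 * (π : ℂ) * I)‖ = 1 / (3 * π) := by simp [abs_of_pos pi_pos]
    rw [norm_mul, hconst, hexp6, div_eq_mul_one_div 2, mul_comm 2]
    gcongr
    exact norm_one_sub_exp_mul_I_le_two _
  calc ‖psi w‖ ≤ _ + _ := norm_add_le _ _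
    _ ≤ 2 * |1 - w| * |Real.cos (π * w)| + 2 / (3 * π) := by rw [hosc]; gcongr

theorem abs_cos_le_half_of_mem_Icc {x : ℝ} (hx : x ∈ Set.Icc (π / 3) (2 * π / 3)) :
    |Real.cos x| ≤ 1 / 2 := by
  obtain ⟨hlo, hhi⟩ := hx
  have hπ := pi_pos
  have hle : Real.cos x ≤ Real.cos (π / 3) :=
    cos_le_cos_of_nonneg_of_le_pi (by positivity) (by linarith) hlo
  have hge : Real.cos (π - π / 3) ≤ Real.cos x :=
    cos_le_cos_of_nonneg_of_le_pi (by linarith) (by linarith) (by linarith)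
  rw [cos_pi_sub, cos_pi_div_three] at *
  exact abs_le.2 ⟨by linarith, hle⟩

theorem one_sub_mul_abs_cos_pi_mul_le {w : ℝ} (hw : w ∈ Set.Icc (1 / 3 : ℝ) 1) :
    (1 - w) * |Real.cos (π * w)| ≤ 1 / 3 := by
  obtain ⟨hlo, hhi⟩ := hw
  have hπ := pi_pos
  rcases le_or_gt w (2 / 3) with hmid | hend
  · have hcos : |Real.cos (π * w)| ≤ 1 / 2 :=
      abs_cos_le_half_of_mem_Icc ⟨by nlinarith, by nlinarith⟩
    nlinarith [abs_nonneg (Real.cos (π * w))]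
  · nlinarith [abs_nonneg (Real.cos (π * w)), abs_cos_le_one (π * w)]

theorem two_div_three_add_two_div_three_pi_le : 2 / 3 + 2 / (3 * π) ≤ 2 - π ^ 2 / 9 := by
  have hlo := pi_gt_d2
  have hhi := pi_lt_d2
  have hinv : 2 / (3 * π) ≤ 2 / (3 * 3.14) := by gcongr
  nlinarith

theorem abs_psi_le_on_tail (w : ℝ) (hw : w ∈ Set.Icc (1 / 3 : ℝ) 1) :
    ‖psi w‖ ≤ 2 - π ^ 2 / 9 := by
  calc ‖psi w‖ ≤ 2 * |1 - w| * |Real.cos (π * w)| + 2 / (3 * π) := norm_psi_le w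
    _ = 2 * ((1 - w) * |Real.cos (π * w)|) + 2 / (3 * π) := by
        rw [abs_of_nonneg (sub_nonneg.2 hw.2)]; ring
    _ ≤ 2 * (1 / 3) + 2 / (3 * π) := by gcongr; exact one_sub_mul_abs_cos_pi_mul_le hw
    _ ≤ 2 - π ^ 2 / 9 := by linarith [two_div_three_add_two_div_three_pi_le]
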